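/- arXiv:2404.15372 — 4 statements merged into one kernel-verified Lean document; each statement's English description precedes it below -/
import Mathlib

section
/- The number of parking functions of length n is (n+1)^{n-1}. -/
/-- `x : Fin n → ℕ` is a parking function of length `n`: entries lie in `{1,...,n}` and
for every `k ∈ {1,...,n}`, at least `k` entries are `≤ k`. -/
def IsParkingFunction (n : ℕ) (x : Fin n → ℕ) : Prop :=
  (∀ i, 1 ≤ x i ∧ x i ≤ n) ∧
  ∀ k, 1 ≤ k → k ≤ n → k ≤ (Finset.univ.filter (fun i => x i ≤ k)).card

/-! Pollak's circle argument. Read `f : Fin n → ZMod (n + 1)` as the preferences of `n` cars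
on a circular street with `n + 1` spots. Let `T t` count the preferences among the first `t`
spots, read periodically. Then `f - t` is a (shifted) parking function iff the walk `T u - u`
never drops below its value at `t` on the next `n` steps. The walk loses exactly `1` per period
of length `n + 1`, so exactly one `t` in each period has this property. Hence every orbit of
`ZMod (n + 1)` acting on `Fin n → ZMod (n + 1)` by adding constants contains exactly one parking
function, and there are `(n + 1) ^ n / (n + 1)` of them. -/

open Finset

theorem existsUnique_le_window_of_add_eq_sub_one (S : ℕ → ℤ) {p : ℕ} (hp : 0 < p)
    (hS : ∀ t, S (t + p) = S t - 1) :
    ∃! t, t < p ∧ ∀ u, t < u → u < t + p → S t ≤ S u := by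
  classical
  have hmin : ∃ t, t < p ∧ ∀ t' < p, S t ≤ S t' := by
    obtain ⟨t, ht, hle⟩ := exists_min_image (range p) S ⟨0, mem_range.2 hp⟩
    exact ⟨t, mem_range.1 ht, fun t' ht' => hle t' (mem_range.2 ht')⟩
  obtain ⟨t₀, ht₀p, ht₀⟩ : ∃ t₀ < p, ∀ u, t₀ < u → u < t₀ + p → S t₀ ≤ S u := by
    obtain ⟨ht₀p, ht₀min⟩ := Nat.find_spec hmin
    refine ⟨Nat.find hmin, ht₀p, fun u hu hup => ?_⟩
    rcases lt_or_ge u p with hup' | hpu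
    · exact ht₀min u hup'
    obtain ⟨v, rfl⟩ := Nat.exists_eq_add_of_le' hpu
    -- `v` comes before the first minimiser, so `S` is strictly smaller somewhere
    have hv : ¬ (v < p ∧ ∀ t' < p, S v ≤ S t') := Nat.find_min hmin (by omega)
    push Not at hv
    obtain ⟨t', ht'p, ht'v⟩ := hv (by omega)
    have := ht₀min t' ht'p
    rw [hS]
    omega
  have absurd_of_lt : ∀ s t, s < t → t < p → (∀ u, s < u → u < s + p → S s ≤ S u) →
      (∀ u, t < u → u < t + p → S t ≤ S u) → False := by
    intro s t hst htp hs ht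
    have h₁ := hs t hst (by omega)
    have h₂ := ht (s + p) (by omega) (by omega)
    rw [hS] at h₂
    omega
  refine ⟨t₀, ⟨ht₀p, ht₀⟩, ?_⟩
  rintro s ⟨hsp, hs⟩
  rcases lt_trichotomy s t₀ with h | h | h
  · exact (absurd_of_lt _ _ h ht₀p hs ht₀).elim
  · exact h
  · exact (absurd_of_lt _ _ h hsp ht₀ hs).elim

noncomputable def Equiv.funEquivSubtypeProdOfExistsUnique {ι G : Type*} [AddGroup G]
    (P : (ι → G) → Prop) (h : ∀ f : ι → G, ∃! a, P (fun i => f i - a)) :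
    (ι → G) ≃ {g // P g} × G where
  toFun f := (⟨fun i => f i - (h f).choose, (h f).choose_spec.1⟩, (h f).choose)
  invFun p i := p.1.1 i + p.2
  left_inv f := by simp
  right_inv := by
    rintro ⟨⟨g, hg⟩, a⟩
    have ha : (h fun i => g i + a).choose = a :=
      ((h _).choose_spec.2 a (by simpa using hg)).symm
    ext i <;> simp [ha]

theorem card_filter_range_natCast_add_eq {N : ℕ} [NeZero N] (a : ZMod N) (t : ℕ) {k : ℕ}
    (hk : k < N) :
    #{m ∈ range (k + 1) | ((t + m : ℕ) : ZMod N) = a} = if (a - t).val ≤ k then 1 else 0 := by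
  have : {m ∈ range (k + 1) | ((t + m : ℕ) : ZMod N) = a} =
      {m ∈ range (k + 1) | (a - t).val = m} := by
    refine filter_congr fun m hm => ?_
    rw [mem_range] at hm
    rw [Nat.cast_add, ← eq_sub_iff_add_eq', eq_comm]
    constructor
    · rintro h; rw [h, ZMod.val_natCast_of_lt (by omega)]
    · rintro h; rw [← h, ZMod.natCast_zmod_val]
  rw [this, filter_eq]
  split_ifs <;> simp_all

variable {n : ℕ}

/-- Parking functions shifted down by one and read in `ZMod (n + 1)`; the bound `g i < n` is
implied (`IsZModParking.val_lt`). -/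
def IsZModParking (g : Fin n → ZMod (n + 1)) : Prop :=
  ∀ k < n, k + 1 ≤ #{i | (g i).val ≤ k}

/-- The number of cars preferring one of the spots `0, …, t - 1`, spots being read modulo
`n + 1`. -/
def prefixCount (f : Fin n → ZMod (n + 1)) (t : ℕ) : ℕ :=
  ∑ m ∈ range t, #{i | f i = m}

theorem prefixCount_add (f : Fin n → ZMod (n + 1)) (t : ℕ) {k : ℕ} (hk : k ≤ n) :
    prefixCount f (t + (k + 1)) = prefixCount f t + #{i | (f i - t).val ≤ k} := by
  rw [prefixCount, sum_range_add, ← prefixCount, card_filter]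
  congr 1
  simp_rw [card_filter, sum_comm (s := range (k + 1)), eq_comm (a := f _)]
  refine sum_congr rfl fun i _ => ?_
  rw [← card_filter, card_filter_range_natCast_add_eq _ _ (by omega)]

theorem prefixCount_add_period (f : Fin n → ZMod (n + 1)) (t : ℕ) :
    prefixCount f (t + (n + 1)) = prefixCount f t + n := by
  rw [prefixCount_add f t le_rfl, filter_true_of_mem fun i _ => Nat.lt_succ_iff.1 (ZMod.val_lt _),
    card_univ, Fintype.card_fin]

def walk (f : Fin n → ZMod (n + 1)) (t : ℕ) : ℤ := prefixCount f t - t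

theorem walk_add_period (f : Fin n → ZMod (n + 1)) (t : ℕ) :
    walk f (t + (n + 1)) = walk f t - 1 := by
  simp only [walk, prefixCount_add_period]
  push_cast
  ring

theorem isZModParking_sub_natCast_iff (f : Fin n → ZMod (n + 1)) (t : ℕ) :
    IsZModParking (fun i => f i - t) ↔ ∀ u, t < u → u < t + (n + 1) → walk f t ≤ walk f u := by
  refine ⟨fun h u htu hut => ?_, fun h k hk => ?_⟩
  · obtain ⟨k, rfl⟩ : ∃ k, u = t + (k + 1) := ⟨u - t - 1, by omega⟩
    have : k + 1 ≤ #{i | (f i - t).val ≤ k} := h k (by omega)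
    simp only [walk, prefixCount_add f t (k := k) (by omega)]
    push_cast
    omega
  · show k + 1 ≤ #{i | (f i - t).val ≤ k}
    have := h (t + (k + 1)) (by omega) (by omega)
    simp only [walk, prefixCount_add f t (k := k) (by omega)] at this
    push_cast at this
    omega

theorem existsUnique_isZModParking_sub (f : Fin n → ZMod (n + 1)) :
    ∃! a : ZMod (n + 1), IsZModParking (fun i => f i - a) := by
  obtain ⟨t, ⟨-, ht⟩, huniq⟩ :=
    existsUnique_le_window_of_add_eq_sub_one (walk f) n.succ_pos (walk_add_period f)
  refine ⟨t, (isZModParking_sub_natCast_iff f t).2 ht, fun a ha => ?_⟩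
  rw [← ZMod.natCast_zmod_val a, isZModParking_sub_natCast_iff] at ha
  rw [← ZMod.natCast_zmod_val a, huniq a.val ⟨ZMod.val_lt a, ha⟩]

theorem IsZModParking.val_lt {g : Fin n → ZMod (n + 1)} (hg : IsZModParking g) (i : Fin n) :
    (g i).val < n := by
  have hn : 0 < n := i.pos
  have hcard := hg (n - 1) (by omega)
  have : (g i).val ≤ n - 1 := filter_card_eq (p := fun i => (g i).val ≤ n - 1)
    (le_antisymm (card_filter_le _ _) (by rw [card_univ, Fintype.card_fin]; omega)) i (mem_univ i)
  omega

theorem isZModParking_iff_isParkingFunction (g : Fin n → ZMod (n + 1)) :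
    IsZModParking g ↔ IsParkingFunction n (fun i => (g i).val + 1) := by
  refine ⟨fun hg => ⟨fun i => ⟨Nat.le_add_left 1 _, hg.val_lt i⟩, fun k hk hkn => ?_⟩,
    fun hg k hk => ?_⟩
  · simpa [Nat.sub_add_cancel hk, Nat.le_sub_iff_add_le hk] using hg (k - 1) (by omega)
  · simpa using hg.2 (k + 1) (by omega) (by omega)

theorem IsParkingFunction.val_natCast_sub_one_add_one {x : Fin n → ℕ}
    (hx : IsParkingFunction n x) (i : Fin n) : ((x i - 1 : ℕ) : ZMod (n + 1)).val + 1 = x i := by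
  have := hx.1 i
  rw [ZMod.val_natCast_of_lt (by omega)]
  omega

def parkingFunctionEquiv :
    {x : Fin n → ℕ // IsParkingFunction n x} ≃ {g : Fin n → ZMod (n + 1) // IsZModParking g} where
  toFun x := ⟨fun i => ((x.1 i - 1 : ℕ) : ZMod (n + 1)), by
    rw [isZModParking_iff_isParkingFunction]
    simpa only [x.2.val_natCast_sub_one_add_one] using x.2⟩
  invFun g := ⟨fun i => (g.1 i).val + 1, (isZModParking_iff_isParkingFunction _).1 g.2⟩
  left_inv x := Subtype.ext (funext x.2.val_natCast_sub_one_add_one)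
  right_inv g := by ext i; simp

theorem card_parkingFunctions_general (n : ℕ) :
    Nat.card {x : Fin n → ℕ // IsParkingFunction n x} = (n + 1) ^ (n - 1) := by
  have hprod := Nat.card_congr <|
    Equiv.funEquivSubtypeProdOfExistsUnique _ (existsUnique_isZModParking_sub (n := n))
  rw [Nat.card_fun, Nat.card_prod, Nat.card_zmod, Nat.card_eq_fintype_card (α := Fin n),
    Fintype.card_fin, ← Nat.card_congr parkingFunctionEquiv] at hprod
  have hpow : (n + 1) ^ n = (n + 1) ^ (n - 1) * (n + 1) := by
    cases n <;> simp [pow_succ]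
  rw [hpow] at hprod
  exact (Nat.eq_of_mul_eq_mul_right n.succ_pos hprod).symm

/-- There are `(n+1)^(n-1)` parking functions of length `n ≥ 1`. -/
theorem card_parkingFunctions (n : ℕ) (hn : 1 ≤ n) :
    Nat.card {x : Fin n → ℕ // IsParkingFunction n x} = (n + 1) ^ (n - 1) :=
  card_parkingFunctions_general n
end

section
/- The number of weakly increasing parking functions of length n equals the n-th Catalan number C_n. -/
/-- An infinite "ballot sequence" representation: monotone, `1 ≤ X m ≤ m+1`, and
`X m = m + 1` for `m ≥ N`. -/
def GoodSeq (N : ℕ) (X : ℕ → ℕ) : Prop :=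
  Monotone X ∧ (∀ m, 1 ≤ X m ∧ X m ≤ m + 1) ∧ ∀ m, N ≤ m → X m = m + 1

instance GoodSeq.finite (N : ℕ) : Finite {X : ℕ → ℕ // GoodSeq N X} := by
  apply Finite.of_injective
    (f := fun (X : {X : ℕ → ℕ // GoodSeq N X}) (i : Fin N) =>
      (⟨X.1 i.val, by have := (X.2.2.1 i.val).2; omega⟩ : Fin (N + 1)))
  intro X Y h
  ext m
  by_cases hm : m < N
  · have := congrFun h ⟨m, hm⟩
    simpa [Fin.ext_iff] using this
  · rw [X.2.2.2 m (by omega), Y.2.2.2 m (by omega)]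

lemma card_filter_lt (n k : ℕ) (h : k ≤ n) :
    (Finset.univ.filter (fun i : Fin n => i.val < k)).card = k := by
  apply Finset.card_eq_of_bijective (f := fun i hi => (⟨i, lt_of_lt_of_le hi h⟩ : Fin n))
  · intro a ha
    simp only [Finset.mem_filter] at ha
    exact ⟨a.val, ha.2, rfl⟩
  · intro i hi
    simp [hi]
  · intro i j hi hj hij
    simpa [Fin.ext_iff] using hij

/-- A monotone parking function satisfies `x i ≤ i + 1`. -/
lemma parking_le (n : ℕ) (x : Fin n → ℕ) (hp : IsParkingFunction n x) (hm : Monotone x)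
    (i : Fin n) : x i ≤ i.val + 1 := by
  by_contra hc
  push_neg at hc
  have hk := hp.2 (i.val + 1) (by omega) (by omega)
  have hsub : (Finset.univ.filter (fun j : Fin n => x j ≤ i.val + 1)) ⊆ Finset.Iio i := by
    intro j hj
    simp only [Finset.mem_filter] at hj
    simp only [Finset.mem_Iio]
    by_contra hji
    push_neg at hji
    have := hm hji
    omega
  have := Finset.card_le_card hsub
  rw [Fin.card_Iio] at this
  omega

/-- Equivalence between monotone parking functions and good sequences. -/
def parkingEquivGood (n : ℕ) :
    {x : Fin n → ℕ // IsParkingFunction n x ∧ Monotone x} ≃ {X : ℕ → ℕ // GoodSeq n X} where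
  toFun x := ⟨fun m => if h : m < n then x.1 ⟨m, h⟩ else m + 1, by
    obtain ⟨x, hp, hm⟩ := x
    refine ⟨monotone_nat_of_le_succ fun m => ?_, fun m => ?_, fun m hm' => ?_⟩
    · dsimp only
      by_cases h1 : m + 1 < n
      · simp only [dif_pos h1, dif_pos (by omega : m < n)]
        exact hm (by simp [Fin.le_def])
      · by_cases h2 : m < n
        · simp only [dif_pos h2, dif_neg h1]
          have := (hp.1 ⟨m, h2⟩).2
          omega
        · simp only [dif_neg h1, dif_neg h2]; omega
    · dsimp only
      by_cases h : m < n
      · simp only [dif_pos h]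
        exact ⟨(hp.1 ⟨m, h⟩).1, parking_le n x hp hm ⟨m, h⟩⟩
      · simp [dif_neg h]
    · dsimp only
      rw [dif_neg (by omega)]⟩
  invFun X := ⟨fun i => X.1 i.val, by
    obtain ⟨X, hmono, hbd, _⟩ := X
    refine ⟨⟨fun i => ⟨(hbd i.val).1, ?_⟩, fun k hk1 hkn => ?_⟩, fun i j hij => hmono hij⟩
    · dsimp only
      have := (hbd i.val).2
      have := i.isLt
      omega
    · calc k = (Finset.univ.filter (fun i : Fin n => i.val < k)).card :=
            (card_filter_lt n k hkn).symm
        _ ≤ _ := by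
            apply Finset.card_le_card
            intro i hi
            simp only [Finset.mem_filter] at hi ⊢
            have := (hbd i.val).2
            exact ⟨hi.1, by omega⟩⟩
  left_inv x := by
    ext i
    simp [i.isLt]
  right_inv X := by
    ext m
    by_cases h : m < n
    · simp [h]
    · simp only [dif_neg h]
      rw [X.2.2.2 m (by omega)]

/-- The gluing map realizing the Catalan recurrence. -/
def glue (a : ℕ) (Y Z : ℕ → ℕ) : ℕ → ℕ := fun m =>
  if m = 0 then 1 else if m ≤ a then Y (m - 1) else Z (m - (a + 1)) + (a + 1)

lemma glue_zero {a : ℕ} {Y Z : ℕ → ℕ} : glue a Y Z 0 = 1 := by simp [glue]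

lemma glue_mid {a m : ℕ} {Y Z : ℕ → ℕ} (h0 : m ≠ 0) (h : m ≤ a) :
    glue a Y Z m = Y (m - 1) := by rw [glue]; rw [if_neg h0, if_pos h]

lemma glue_gt {a m : ℕ} {Y Z : ℕ → ℕ} (h : a < m) :
    glue a Y Z m = Z (m - (a + 1)) + (a + 1) := by
  rw [glue]; rw [if_neg (by omega), if_neg (by omega)]

lemma good_glue {N a : ℕ} (ha : a ≤ N) {Y Z : ℕ → ℕ} (hY : GoodSeq a Y)
    (hZ : GoodSeq (N - a) Z) : GoodSeq (N + 1) (glue a Y Z) := by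
  obtain ⟨Ym, Yb, Yt⟩ := hY
  obtain ⟨Zm, Zb, Zt⟩ := hZ
  refine ⟨monotone_nat_of_le_succ fun m => ?_, fun m => ?_, fun m hm => ?_⟩
  · rcases Nat.eq_zero_or_pos m with h0 | h0
    · subst h0
      rw [glue_zero]
      show 1 ≤ glue a Y Z 1
      by_cases h1 : 1 ≤ a
      · rw [glue_mid one_ne_zero h1]
        exact (Yb 0).1
      · rw [glue_gt (by omega)]
        omega
    · by_cases h1 : m + 1 ≤ a
      · rw [glue_mid (by omega) (by omega), glue_mid (by omega) h1]
        exact Ym (by omega)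
      · by_cases h2 : m ≤ a
        · rw [glue_mid (by omega) h2, glue_gt (by omega)]
          have := (Yb (m - 1)).2
          have := (Zb (m + 1 - (a + 1))).1
          omega
        · rw [glue_gt (by omega), glue_gt (by omega)]
          have := Zm (show m - (a + 1) ≤ m + 1 - (a + 1) by omega)
          omega
  · rcases Nat.eq_zero_or_pos m with h0 | h0
    · subst h0; rw [glue_zero]; omega
    · by_cases h1 : m ≤ a
      · rw [glue_mid (by omega) h1]
        have := (Yb (m - 1)).1
        have := (Yb (m - 1)).2
        omega
      · rw [glue_gt (by omega)]
        have := (Zb (m - (a + 1))).1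
        have := (Zb (m - (a + 1))).2
        omega
  · rw [glue_gt (by omega)]
    have := Zt (m - (a + 1)) (by omega)
    omega

lemma glue_touch {N a : ℕ} {Y Z : ℕ → ℕ} (hZ : GoodSeq (N - a) Z) :
    glue a Y Z (a + 1) = a + 2 := by
  rw [glue_gt (by omega)]
  have h0 : a + 1 - (a + 1) = 0 := by omega
  rw [h0]
  have h1 := (hZ.2.1 0).1
  have h2 := (hZ.2.1 0).2
  omega

lemma glue_notouch {a m : ℕ} {Y Z : ℕ → ℕ} (hY : GoodSeq a Y) (hm : m < a) :
    glue a Y Z (m + 1) ≤ m + 1 := by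
  rw [glue_mid (by omega) (by omega)]
  have := (hY.2.1 (m + 1 - 1)).2
  omega

/-- The decomposition bijection for the Catalan recurrence. -/
lemma glue_bijective (N : ℕ) :
    Function.Bijective (fun s : (Σ a : Fin (N + 1),
        {Y : ℕ → ℕ // GoodSeq a.val Y} × {Z : ℕ → ℕ // GoodSeq (N - a.val) Z}) =>
      (⟨glue s.1.val s.2.1.1 s.2.2.1,
        good_glue (by omega) s.2.1.2 s.2.2.2⟩ : {X : ℕ → ℕ // GoodSeq (N + 1) X})) := by
  constructor
  · rintro ⟨a, Y, Z⟩ ⟨b, W, V⟩ h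
    simp only [Subtype.mk.injEq] at h
    have hab : a.val = b.val := by
      by_contra hne
      rcases Nat.lt_or_ge a.val b.val with hlt | hge
      · have h1 : glue a.val Y.1 Z.1 (a.val + 1) = a.val + 2 := glue_touch Z.2
        have h2 : glue b.val W.1 V.1 (a.val + 1) ≤ a.val + 1 := glue_notouch W.2 hlt
        rw [h] at h1
        omega
      · have hlt : b.val < a.val := by omega
        have h1 : glue b.val W.1 V.1 (b.val + 1) = b.val + 2 := glue_touch V.2
        have h2 : glue a.val Y.1 Z.1 (b.val + 1) ≤ b.val + 1 := glue_notouch Y.2 hlt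
        rw [h] at h2
        omega
    have hab' : a = b := Fin.ext hab
    subst hab'
    refine congrArg (Sigma.mk a) ?_
    refine Prod.ext (Subtype.ext (funext fun m => ?_)) (Subtype.ext (funext fun m => ?_))
    · by_cases hm : m < a.val
      · have := congrFun h (m + 1)
        rwa [glue_mid (by omega) (by omega), glue_mid (by omega) (by omega),
          Nat.add_sub_cancel] at this
      · rw [Y.2.2.2 m (by omega), W.2.2.2 m (by omega)]
    · have := congrFun h (a.val + 1 + m)
      rw [glue_gt (by omega), glue_gt (by omega)] at this
      have hidx : a.val + 1 + m - (a.val + 1) = m := by omega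
      rw [hidx] at this
      dsimp only at this ⊢
      omega
  · rintro ⟨X, hXm, hXb, hXt⟩
    have hq : X (N + 1) = N + 2 := hXt (N + 1) (by omega)
    have hex : ∃ m, X (m + 1) = m + 2 := ⟨N, by simpa using hXt (N + 1) (by omega)⟩
    classical
    set a := Nat.find hex with hadef
    have haN : a ≤ N := Nat.find_le (by simpa using hXt (N + 1) (by omega))
    have haspec : X (a + 1) = a + 2 := Nat.find_spec hex
    have hamin : ∀ m < a, X (m + 1) ≠ m + 2 := fun m hm => Nat.find_min hex hm
    set Y : ℕ → ℕ := fun m => if m < a then X (m + 1) else m + 1 with hYdef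
    set Z : ℕ → ℕ := fun m => X (a + 1 + m) - (a + 1) with hZdef
    have hYg : GoodSeq a Y := by
      refine ⟨monotone_nat_of_le_succ fun m => ?_, fun m => ?_, fun m hm => ?_⟩
      · simp only [hYdef]
        by_cases h1 : m + 1 < a
        · rw [if_pos (by omega), if_pos h1]
          exact hXm (by omega)
        · by_cases h2 : m < a
          · rw [if_pos h2, if_neg h1]
            have := (hXb (m + 1)).2
            omega
          · rw [if_neg h2, if_neg h1]
            omega
      · simp only [hYdef]
        by_cases h : m < a
        · rw [if_pos h]
          refine ⟨(hXb (m + 1)).1, ?_⟩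
          have := (hXb (m + 1)).2
          have := hamin m h
          omega
        · rw [if_neg h]; omega
      · simp only [hYdef]
        rw [if_neg (by omega)]
    have hZg : GoodSeq (N - a) Z := by
      refine ⟨fun m m' hmm => ?_, fun m => ?_, fun m hm => ?_⟩
      · simp only [hZdef]
        exact Nat.sub_le_sub_right (hXm (by omega)) _
      · simp only [hZdef]
        have h1 : X (a + 1) ≤ X (a + 1 + m) := hXm (by omega)
        have h2 := (hXb (a + 1 + m)).2
        omega
      · simp only [hZdef]
        have : X (a + 1 + m) = a + 1 + m + 1 := hXt (a + 1 + m) (by omega)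
        omega
    refine ⟨⟨⟨a, by omega⟩, ⟨Y, hYg⟩, ⟨Z, hZg⟩⟩, ?_⟩
    apply Subtype.ext
    funext m
    show glue a Y Z m = X m
    rcases Nat.eq_zero_or_pos m with h0 | h0
    · subst h0
      have := (hXb 0).1
      have := (hXb 0).2
      rw [glue_zero]
      omega
    · by_cases h1 : m ≤ a
      · rw [glue_mid (by omega) h1]
        simp only [hYdef]
        rw [if_pos (by omega)]
        congr 1
        omega
      · rw [glue_gt (by omega)]
        simp only [hZdef]
        have hidx : a + 1 + (m - (a + 1)) = m := by omega
        rw [hidx]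
        have : X (a + 1) ≤ X m := hXm (by omega)
        omega

lemma natcard_sigma {k : ℕ} (β : Fin k → Type*) [∀ i, Finite (β i)] :
    Nat.card (Σ i, β i) = ∑ i, Nat.card (β i) := by
  have : ∀ i, Fintype (β i) := fun i => Fintype.ofFinite _
  simp [Nat.card_eq_fintype_card]

lemma goodSeq_card_eq_catalan (n : ℕ) :
    Nat.card {X : ℕ → ℕ // GoodSeq n X} = catalan n := by
  induction n using Nat.strong_induction_on with
  | _ n ih =>
    match n with
    | 0 =>
      rw [catalan_zero]
      have : Unique {X : ℕ → ℕ // GoodSeq 0 X} := by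
        refine ⟨⟨⟨fun m => m + 1, fun i j hij => by dsimp only; omega, fun m => by dsimp only; omega,
          fun m _ => rfl⟩⟩, ?_⟩
        rintro ⟨X, hX⟩
        apply Subtype.ext
        funext m
        exact hX.2.2 m (by omega)
      exact Nat.card_unique
    | N + 1 =>
      rw [← Nat.card_congr (Equiv.ofBijective _ (glue_bijective N))]
      rw [natcard_sigma, catalan_succ]
      apply Finset.sum_congr rfl
      intro i _
      rw [Nat.card_prod, ih i.val (by omega), ih (N - i.val) (by omega)]

/-- The number of weakly increasing parking functions of length `n` is the `n`-th
Catalan number. -/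
theorem card_monotone_parkingFunctions_eq_catalan (n : ℕ) :
    Nat.card {x : Fin n → ℕ // IsParkingFunction n x ∧ Monotone x} = catalan n := by
  rw [Nat.card_congr (parkingEquivGood n)]
  exact goodSeq_card_eq_catalan n
end

section
/- For any x ∈ [n]^n with weakly increasing rearrangement x', if there exists an index i with x'_i > i, then at least one car fails to park under the parking process applied to x. -/
/-!
If all cars park, the spots they occupy are `n` distinct numbers `≤ n`, each at least the
preference of its car. Hence at least `k` spots are `≤ k` (at most `n - k` distinct
spots fit into `(k, n]`), and at least as many preferences are `≤ k`. But `x'ᵢ > i + 1 = k` in the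
sorted list leaves at most `i < k` preferences `≤ k`.
-/

/-- Car with preference `p` parks in the first unoccupied spot among `p, p+1, ..., n`,
if any. -/
def parkOne (n : ℕ) (occ : Finset ℕ) (p : ℕ) : Option ℕ :=
  (List.range' p (n + 1 - p)).find? (fun s => s ∉ occ)

/-- Run the parking process for all cars, returning the list of spots where the cars
park (in order of arrival), or `none` if some car fails to park. -/
def parkAll (n : ℕ) : List ℕ → Finset ℕ → Option (List ℕ)
  | [], _ => some []
  | p :: ps, occ =>
    match parkOne n occ p with
    | none => none
    | some s => (parkAll n ps (insert s occ)).map (s :: ·)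

namespace List

variable {α : Type*} [Preorder α] [DecidableLE α]

theorem countP_le_countP_of_forall₂_le (k : α) {x l : List α} (h : Forall₂ (· ≤ ·) x l) :
    l.countP (· ≤ k) ≤ x.countP (· ≤ k) := by
  induction h with
  | nil => rfl
  | @cons a b _ _ hab _ ih =>
    by_cases hb : b ≤ k
    · simp [hb, hab.trans hb, ih]
    · grind

theorem countP_le_of_pairwise_of_lt_getElem {y : List α} (hy : y.Pairwise (· ≤ ·)) {i : ℕ}
    (hi : i < y.length) {k : α} (hk : k < y[i]) : y.countP (· ≤ k) ≤ i := by
  have hdrop : (y.drop i).countP (· ≤ k) = 0 := by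
    rw [countP_eq_zero]
    intro a ha hak
    obtain ⟨j, hj, rfl⟩ := mem_drop_iff_getElem.mp ha
    have hle : y[i] ≤ y[i + j] := by
      rcases j.eq_zero_or_pos with rfl | hj0
      · exact le_rfl
      · exact pairwise_iff_getElem.mp hy _ _ _ _ (by omega)
    exact (hk.trans_le hle).not_ge (by simpa using hak)
  calc y.countP (· ≤ k)
      = (y.take i).countP (· ≤ k) + (y.drop i).countP (· ≤ k) := by
        rw [← countP_append, take_append_drop]
    _ ≤ i := by simpa [hdrop] using countP_le_length.trans (length_take_le i y)

end List

theorem List.le_countP_le_of_nodup {l : List ℕ} (hnd : l.Nodup) (hl : ∀ s ∈ l, s ≤ l.length)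
    {k : ℕ} (hk : k ≤ l.length) : k ≤ l.countP (· ≤ k) := by
  have hgt : l.countP (fun s => ¬ s ≤ k) ≤ l.length - k := by
    have hsub : (l.filter (fun s => ¬ s ≤ k)).toFinset ⊆ Finset.Ioc k l.length := by
      intro s hs
      simp only [mem_toFinset, mem_filter, decide_eq_true_eq] at hs
      exact Finset.mem_Ioc.mpr ⟨not_le.mp hs.2, hl s hs.1⟩
    have := Finset.card_le_card hsub
    rw [toFinset_card_of_nodup (hnd.filter _)] at this
    simpa [countP_eq_length_filter] using this
  have := l.length_eq_countP_add_countP (· ≤ k)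
  grind

theorem parkOne_spec {n : ℕ} {occ : Finset ℕ} {p s : ℕ} (h : parkOne n occ p = some s) :
    p ≤ s ∧ s ≤ n ∧ s ∉ occ := by
  obtain ⟨i, hi, rfl⟩ := List.mem_range'.mp (List.mem_of_find?_eq_some h)
  exact ⟨Nat.le_add_right _ _, by omega, by simpa using List.find?_some h⟩

theorem parkAll_spec {n : ℕ} {ps : List ℕ} {occ : Finset ℕ} {l : List ℕ}
    (h : parkAll n ps occ = some l) :
    List.Forall₂ (· ≤ ·) ps l ∧ l.Nodup ∧ ∀ s ∈ l, s ≤ n ∧ s ∉ occ := by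
  induction ps generalizing occ l with
  | nil =>
    obtain rfl : l = [] := by simpa [parkAll] using h.symm
    simp
  | cons p ps ih =>
    rcases hp : parkOne n occ p with _ | s
    · simp [parkAll, hp] at h
    obtain ⟨hps, hsn, hso⟩ := parkOne_spec hp
    obtain ⟨l', hrec, rfl⟩ : ∃ l', parkAll n ps (insert s occ) = some l' ∧ s :: l' = l := by
      simpa [parkAll, hp] using h
    obtain ⟨hf, hnd, hocc⟩ := ih hrec
    refine ⟨.cons hps hf, .cons (fun hs => (hocc s hs).2 (Finset.mem_insert_self s occ)) hnd, ?_⟩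
    rintro t (_ | ⟨_, ht⟩)
    · exact ⟨hsn, hso⟩
    · exact ⟨(hocc t ht).1, fun htocc => (hocc t ht).2 (Finset.mem_insert_of_mem htocc)⟩

theorem not_parkingFunction_of_sorted_gt_general (n : ℕ) (x : List ℕ)
    (hlen : x.length = n)
    (h : ∃ i < n, i + 1 < (x.mergeSort (fun a b => a ≤ b)).getD i 0) :
    parkAll n x ∅ = none := by
  obtain ⟨i, hin, hgt⟩ := h
  set y := x.mergeSort (fun a b => a ≤ b)
  have hiy : i < y.length := by simpa [y, hlen] using hin
  have hx_few : x.countP (· ≤ i + 1) ≤ i := by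
    rw [← (x.mergeSort_perm _).countP_eq]
    exact List.countP_le_of_pairwise_of_lt_getElem (List.pairwise_mergeSort' (· ≤ ·) x) hiy
      (by rwa [← List.getD_eq_getElem y 0])
  by_contra hpark
  obtain ⟨l, hl⟩ := Option.ne_none_iff_exists'.mp hpark
  obtain ⟨hf, hnd, hspots⟩ := parkAll_spec hl
  have hllen : l.length = n := hf.length_eq ▸ hlen
  have hl_many : i + 1 ≤ l.countP (· ≤ i + 1) :=
    List.le_countP_le_of_nodup hnd (fun s hs => hllen ▸ (hspots s hs).1) (by omega)
  have hx_many := List.countP_le_countP_of_forall₂_le (i + 1) hf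
  omega

/-- If the weakly increasing rearrangement `x'` of `x` has `x'_i > i` for some `i`
(0-indexed: `x'[i] > i + 1`), then some car fails to park. -/
theorem not_parkingFunction_of_sorted_gt (n : ℕ) (x : List ℕ)
    (hlen : x.length = n) (hx : ∀ a ∈ x, 1 ≤ a ∧ a ≤ n)
    (h : ∃ i < n, i + 1 < (x.mergeSort (fun a b => a ≤ b)).getD i 0) :
    parkAll n x ∅ = none :=
  not_parkingFunction_of_sorted_gt_general n x hlen h
end

section
/- For a weakly increasing parking function x' of length n and its corresponding Dyck path under the standard bijection, the number of full unit squares strictly between the Dyck path and the main diagonal equals the total displacement Σ_{i=1}^n (i − x'_i). -/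
/-- A Dyck path of length `2n`, encoded as a list of booleans (`true` = North step,
`false` = East step): `n` steps of each kind, and every prefix has at least as many
North steps as East steps. -/
def IsDyckPath (n : ℕ) (p : List Bool) : Prop :=
  p.length = 2 * n ∧ p.count true = n ∧
  ∀ k, ((p.take k).count false) ≤ ((p.take k).count true)

/-- `eBefore p k` is the number of East steps (`false`) before the `k`-th North step
(`true`, 1-indexed) of the path `p`. -/
def eBefore : List Bool → ℕ → ℕ
  | [], _ => 0
  | true :: rest, k => if k ≤ 1 then 0 else eBefore rest (k - 1)
  | false :: rest, k => 1 + eBefore rest k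

/-- For a Dyck path of length `2n` with associated weakly increasing parking function
`x'` (so `x'_i = eBefore p i + 1`), the number of full unit squares strictly between
the path and the main diagonal equals the total displacement `Σ_{i=1}^n (i - x'_i)`.
A full square with lower-left corner `(a, b)` lies strictly between them iff it is
above the diagonal (`a + 1 ≤ b`) and weakly below the path (`eBefore p (b+1) ≤ a`). -/
theorem squares_between_eq_displacement (n : ℕ) (p : List Bool) (hp : IsDyckPath n p) :
    ((Finset.range n ×ˢ Finset.range n).filter
        (fun ab => ab.1 + 1 ≤ ab.2 ∧ eBefore p (ab.2 + 1) ≤ ab.1)).card =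
      ∑ i ∈ Finset.range n, ((i + 1) - (eBefore p (i + 1) + 1)) := by
  classical
  rw [Finset.card_eq_sum_card_fiberwise (f := Prod.snd) (t := Finset.range n)
    (fun x hx => (Finset.mem_product.1 (Finset.mem_filter.1 hx).1).2)]
  refine Finset.sum_congr rfl fun b hb => ?_
  have hbn : b < n := Finset.mem_range.1 hb
  have : (((Finset.range n ×ˢ Finset.range n).filter
        (fun ab => ab.1 + 1 ≤ ab.2 ∧ eBefore p (ab.2 + 1) ≤ ab.1)).filter
        (fun x => x.2 = b)) =
      (Finset.Ico (eBefore p (b + 1)) b).image (fun a => (a, b)) := by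
    ext ⟨a, c⟩
    simp only [Finset.mem_filter, Finset.mem_product, Finset.mem_range, Finset.mem_image,
      Finset.mem_Ico, Prod.mk.injEq]
    constructor
    · rintro ⟨⟨⟨ha, hc⟩, h1, h2⟩, rfl⟩
      exact ⟨a, ⟨h2, by omega⟩, rfl, rfl⟩
    · rintro ⟨a', ⟨h1, h2⟩, rfl, rfl⟩
      exact ⟨⟨⟨by omega, hbn⟩, by omega, h1⟩, rfl⟩
  rw [this, Finset.card_image_of_injective _ (fun x y h => by simpa using h),
    Nat.card_Ico]
  omega
end
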